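/- arXiv:1501.00671 — 2 statements merged into one kernel-verified Lean document; each statement's English description precedes it below -/
import Mathlib

section
/- Every homogeneous polynomial in F⟨X⟩ has a unique factorization into irreducible polynomials in F⟨X⟩, up to nonzero scalar multiples of the factors. -/
/-- Degree of a noncommutative polynomial: max length of a monomial with nonzero coefficient. -/
noncomputable def deg {F X : Type} [Field F] (f : MonoidAlgebra F (FreeMonoid X)) : Nat :=
  f.coeff.support.sup FreeMonoid.length

/-- Set of variables occurring in nonzero monomials of `f`. -/
def vars {F X : Type} [Field F] (f : MonoidAlgebra F (FreeMonoid X)) : Set X :=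
  {x | ∃ m ∈ f.coeff.support, x ∈ FreeMonoid.toList m}

/-- `f` is irreducible: no factorization into two factors of positive degree. -/
def Irred {F X : Type} [Field F] (f : MonoidAlgebra F (FreeMonoid X)) : Prop :=
  ¬ ∃ g h : MonoidAlgebra F (FreeMonoid X), f = g * h ∧ 0 < deg g ∧ 0 < deg h

/-- `f` is variable-disjoint irreducible. -/
def VDIrred {F X : Type} [Field F] (f : MonoidAlgebra F (FreeMonoid X)) : Prop :=
  ¬ ∃ g h : MonoidAlgebra F (FreeMonoid X),
      f = g * h ∧ 0 < deg g ∧ 0 < deg h ∧ vars g ∩ vars h = ∅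

/-- `f` is homogeneous of degree `d`. -/
def Homog {F X : Type} [Field F] (f : MonoidAlgebra F (FreeMonoid X)) (d : Nat) : Prop :=
  ∀ m ∈ f.coeff.support, FreeMonoid.length m = d

/-!
The degree is additive on products, since the product of two monomials of top length cannot be
cancelled; so every polynomial factors into irreducibles by induction on the degree.

Uniqueness rests on a rigidity property of homogeneous elements: if `g * h = u * v` with `g`, `u`,
`v` homogeneous and `deg g ≤ deg u`, fix a word `n` of `v`. Since `v` is homogeneous, the
coefficient of `u * v` at `p * n` is `u.coeff p * v.coeff n`, and since `g` is homogeneous, the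
coefficient of `g * h` at `p * n` is that of `g * h'` at `p`, where `h'` is `h` divided on the
right by `n`; hence `u = g * w` with `w` a multiple of `h'`. When `u` is irreducible, `w` is a
scalar, so the first factors of two factorizations agree up to a scalar. Factors of a homogeneous
product are homogeneous (compare the products of the shortest and of the longest words), so one
cancels the first factors and inducts on the length of the factorization.
-/

namespace FreeMonoid

variable {X : Type*}

theorem mul_inj_of_length_eq {x y x' y' : FreeMonoid X} (h : x' * y' = x * y)
    (hl : x'.length = x.length) : x' = x ∧ y' = y :=
  List.append_inj h hl

theorem exists_eq_mul_of_le_length {a : ℕ} {p : FreeMonoid X} (ha : a ≤ p.length) :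
    ∃ x y : FreeMonoid X, p = x * y ∧ x.length = a :=
  ⟨ofList (p.toList.take a), ofList (p.toList.drop a), (List.take_append_drop a p.toList).symm,
    List.length_take_of_le ha⟩

end FreeMonoid

open FreeMonoid MonoidAlgebra

section Semiring

variable {k X : Type*} [Semiring k]

theorem exists_mul_eq_of_mem_support_mul {g h : MonoidAlgebra k (FreeMonoid X)}
    {m : FreeMonoid X} (hm : m ∈ (g * h).coeff.support) :
    ∃ x ∈ g.coeff.support, ∃ y ∈ h.coeff.support, x * y = m := by
  classical
  exact Finset.mem_mul.mp (support_coeff_mul_subset g h hm)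

theorem coeff_mul_mul_of_length {g h : MonoidAlgebra k (FreeMonoid X)} {x y : FreeMonoid X}
    (hl : ∀ x' ∈ g.coeff.support, ∀ y' ∈ h.coeff.support,
      x'.length + y'.length = x.length + y.length → x'.length = x.length) :
    (g * h).coeff (x * y) = g.coeff x * h.coeff y :=
  coeff_mul_mul_of_uniqueMul fun x' y' hx' hy' he =>
    mul_inj_of_length_eq he (hl x' hx' y' hy' (by rw [← length_mul, ← length_mul, he]))

theorem mul_mem_support_mul_of_length [NoZeroDivisors k] {g h : MonoidAlgebra k (FreeMonoid X)}
    {x y : FreeMonoid X} (hx : x ∈ g.coeff.support) (hy : y ∈ h.coeff.support)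
    (hl : ∀ x' ∈ g.coeff.support, ∀ y' ∈ h.coeff.support,
      x'.length + y'.length = x.length + y.length → x'.length = x.length) :
    x * y ∈ (g * h).coeff.support := by
  rw [Finsupp.mem_support_iff, coeff_mul_mul_of_length hl]
  exact mul_ne_zero (Finsupp.mem_support_iff.mp hx) (Finsupp.mem_support_iff.mp hy)

noncomputable def rightQuot (n : FreeMonoid X) (f : MonoidAlgebra k (FreeMonoid X)) :
    MonoidAlgebra k (FreeMonoid X) :=
  ofCoeff (f.coeff.comapDomain (· * n) (mul_left_injective n).injOn)

@[simp]
theorem coeff_rightQuot (n : FreeMonoid X) (f : MonoidAlgebra k (FreeMonoid X))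
    (q : FreeMonoid X) : (rightQuot n f).coeff q = f.coeff (q * n) :=
  rfl

end Semiring

variable {F X : Type} [Field F]

local notation "R" => MonoidAlgebra F (FreeMonoid X)

theorem length_le_deg {f : R} {m : FreeMonoid X} (hm : m ∈ f.coeff.support) :
    m.length ≤ deg f :=
  Finset.le_sup hm

theorem exists_mem_support_length_eq_deg {f : R} (hf : f ≠ 0) :
    ∃ m ∈ f.coeff.support, m.length = deg f := by
  obtain ⟨m, hm, he⟩ := Finset.exists_mem_eq_sup f.coeff.support
    (Finsupp.support_nonempty_iff.mpr (by simpa using hf)) length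
  exact ⟨m, hm, he.symm⟩

theorem ne_zero_of_deg_pos {f : R} (hf : 0 < deg f) : f ≠ 0 := by
  rintro rfl
  simp [deg] at hf

theorem list_prod_ne_zero_of_deg_pos {L : List R} (hL : ∀ p ∈ L, 0 < deg p) : L.prod ≠ 0 :=
  List.prod_ne_zero fun h0 => ne_zero_of_deg_pos (hL 0 h0) rfl

theorem Homog.deg_eq {f : R} {d : ℕ} (hf : Homog f d) (hf0 : f ≠ 0) : deg f = d := by
  obtain ⟨m, hm, he⟩ := exists_mem_support_length_eq_deg hf0
  rw [← he, hf m hm]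

theorem deg_smul (f : R) {α : F} (hα : α ≠ 0) : deg (α • f) = deg f := by
  rw [deg, coeff_smul, Finsupp.support_smul_eq hα, deg]

theorem deg_one : deg (1 : R) = 0 :=
  (show Homog (1 : R) 0 by simp [Homog, one_def]).deg_eq one_ne_zero

theorem deg_mul {g h : R} (hg : g ≠ 0) (hh : h ≠ 0) : deg (g * h) = deg g + deg h := by
  obtain ⟨x, hx, hxd⟩ := exists_mem_support_length_eq_deg hg
  obtain ⟨y, hy, hyd⟩ := exists_mem_support_length_eq_deg hh
  have hmem : x * y ∈ (g * h).coeff.support :=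
    mul_mem_support_mul_of_length hx hy fun x' hx' y' hy' _ => by
      have := length_le_deg hx'; have := length_le_deg hy'; omega
  refine le_antisymm (Finset.sup_le fun m hm => ?_)
    (hxd ▸ hyd ▸ length_mul x y ▸ length_le_deg hmem)
  obtain ⟨x', hx', y', hy', rfl⟩ := exists_mul_eq_of_mem_support_mul hm
  rw [length_mul]
  exact add_le_add (length_le_deg hx') (length_le_deg hy')

theorem deg_list_prod {L : List R} (hL : ∀ p ∈ L, 0 < deg p) :
    deg L.prod = (L.map deg).sum := by
  induction L with
  | nil => simp [deg_one]
  | cons p L ih =>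
    obtain ⟨hp, hL⟩ := List.forall_mem_cons.mp hL
    rw [List.prod_cons, deg_mul (ne_zero_of_deg_pos hp) (list_prod_ne_zero_of_deg_pos hL), ih hL,
      List.map_cons, List.sum_cons]

theorem eq_nil_of_deg_prod_eq_zero {L : List R} (hL : ∀ p ∈ L, 0 < deg p)
    (h : deg L.prod = 0) : L = [] := by
  rw [deg_list_prod hL] at h
  cases L with
  | nil => rfl
  | cons p L =>
    rw [List.map_cons, List.sum_cons] at h
    exact absurd (hL p List.mem_cons_self) (by omega)

theorem eq_smul_one_of_deg_eq_zero {f : R} (hf : deg f = 0) : f = f.coeff 1 • 1 := by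
  ext m
  by_cases hm : m = 1
  · simp [hm, one_def]
  · have hmf : m ∉ f.coeff.support := fun h =>
      hm (length_eq_zero.mp (Nat.le_zero.mp (hf ▸ length_le_deg h)))
    simp [one_def, Finsupp.notMem_support_iff.mp hmf, Ne.symm hm]

theorem Homog.coeff_mul_mul_left {g : R} {a : ℕ} (hg : Homog g a) (h : R) {x : FreeMonoid X}
    (hx : x.length = a) (y : FreeMonoid X) : (g * h).coeff (x * y) = g.coeff x * h.coeff y :=
  coeff_mul_mul_of_length fun x' hx' _ _ _ => (hg x' hx').trans hx.symm

theorem Homog.coeff_mul_mul_right {h : R} {b : ℕ} (hh : Homog h b) (g : R) (x : FreeMonoid X)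
    {y : FreeMonoid X} (hy : y.length = b) : (g * h).coeff (x * y) = g.coeff x * h.coeff y :=
  coeff_mul_mul_of_length fun _ _ y' hy' he => by rw [hh y' hy', ← hy] at he; omega

theorem Homog.le_length_of_mem_support_mul {g : R} {a : ℕ} (hg : Homog g a) (h : R)
    {m : FreeMonoid X} (hm : m ∈ (g * h).coeff.support) : a ≤ m.length := by
  obtain ⟨x, hx, y, -, rfl⟩ := exists_mul_eq_of_mem_support_mul hm
  rw [length_mul, hg x hx]
  omega

theorem Homog.of_mul {g h : R} {d : ℕ} (hgh : Homog (g * h) d) (hg : g ≠ 0) (hh : h ≠ 0) :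
    Homog g (deg g) ∧ Homog h (deg h) := by
  obtain ⟨x₀, hx₀, hx₀min⟩ := Finset.exists_min_image g.coeff.support length
    (Finsupp.support_nonempty_iff.mpr (by simpa using hg))
  obtain ⟨y₀, hy₀, hy₀min⟩ := Finset.exists_min_image h.coeff.support length
    (Finsupp.support_nonempty_iff.mpr (by simpa using hh))
  obtain ⟨x₁, hx₁, hx₁d⟩ := exists_mem_support_length_eq_deg hg
  obtain ⟨y₁, hy₁, hy₁d⟩ := exists_mem_support_length_eq_deg hh
  have hlow := hgh _ <| mul_mem_support_mul_of_length hx₀ hy₀ fun x hx y hy _ => by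
    have := hx₀min x hx; have := hy₀min y hy; omega
  have hhigh := hgh _ <| mul_mem_support_mul_of_length hx₁ hy₁ fun x hx y hy _ => by
    have := length_le_deg hx; have := length_le_deg hy; omega
  rw [length_mul] at hlow hhigh
  have := hx₀min x₁ hx₁
  have := hy₀min y₁ hy₁
  constructor
  · intro m hm
    have := hx₀min m hm; have := length_le_deg hm; omega
  · intro m hm
    have := hy₀min m hm; have := length_le_deg hm; omega

theorem Homog.exists_eq_mul_of_mul_eq_mul {g h u v : R} {a c e : ℕ} (hg : Homog g a)
    (hu : Homog u c) (hv : Homog v e) (hv0 : v ≠ 0) (hac : a ≤ c) (heq : g * h = u * v) :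
    ∃ w, u = g * w := by
  obtain ⟨n, hn⟩ := Finsupp.support_nonempty_iff.mpr (show v.coeff ≠ 0 by simpa using hv0)
  have hβ : v.coeff n ≠ 0 := Finsupp.mem_support_iff.mp hn
  have hu_coeff (p : FreeMonoid X) : u.coeff p * v.coeff n = (g * h).coeff (p * n) := by
    rw [heq, hv.coeff_mul_mul_right u p (hv n hn)]
  refine ⟨(v.coeff n)⁻¹ • rightQuot n h, ?_⟩
  ext p
  rw [mul_smul_comm, coeff_smul, Finsupp.smul_apply, smul_eq_mul]
  rcases lt_or_ge p.length a with hpa | hpa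
  · have hgp : p ∉ (g * rightQuot n h).coeff.support := fun hp =>
      (hg.le_length_of_mem_support_mul _ hp).not_gt hpa
    have hup : p ∉ u.coeff.support := fun hp => (hu p hp ▸ hac).not_gt hpa
    rw [Finsupp.notMem_support_iff.mp hgp, Finsupp.notMem_support_iff.mp hup, mul_zero]
  · obtain ⟨x, y, rfl, hx⟩ := exists_eq_mul_of_le_length hpa
    rw [hg.coeff_mul_mul_left _ hx, coeff_rightQuot, ← hg.coeff_mul_mul_left h hx, ← mul_assoc,
      ← hu_coeff]
    field_simp

theorem Irred.exists_smul_eq_of_mul_eq_mul {g h u v : R} {e : ℕ} (hu : Irred u)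
    (hg : Homog g (deg g)) (hud : Homog u (deg u)) (hv : Homog v e) (hv0 : v ≠ 0)
    (hdg : 0 < deg g) (hle : deg g ≤ deg u) (heq : g * h = u * v) :
    ∃ α : F, α ≠ 0 ∧ u = α • g := by
  obtain ⟨w, rfl⟩ := hg.exists_eq_mul_of_mul_eq_mul hud hv hv0 hle heq
  have hw0 : w ≠ 0 := right_ne_zero_of_mul (ne_zero_of_deg_pos (hdg.trans_le hle))
  have hw : deg w = 0 := Nat.eq_zero_of_not_pos fun hw => hu ⟨g, w, rfl, hdg, hw⟩
  have hw_eq := eq_smul_one_of_deg_eq_zero hw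
  refine ⟨w.coeff 1, fun h0 => hw0 (by rw [hw_eq, h0, zero_smul]), ?_⟩
  conv_lhs => rw [hw_eq, mul_smul_comm, mul_one]

theorem exists_smul_eq_of_mul_eq_mul {g h u v : R} {d e : ℕ} (hg : Irred g) (hu : Irred u)
    (hgd : Homog g (deg g)) (hud : Homog u (deg u)) (hh : Homog h d) (hv : Homog v e)
    (hh0 : h ≠ 0) (hv0 : v ≠ 0) (hdg : 0 < deg g) (hdu : 0 < deg u) (heq : g * h = u * v) :
    ∃ α : F, α ≠ 0 ∧ g = α • u := by
  rcases le_total (deg g) (deg u) with hle | hle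
  · obtain ⟨α, hα, rfl⟩ := hu.exists_smul_eq_of_mul_eq_mul hgd hud hv hv0 hdg hle heq
    exact ⟨α⁻¹, inv_ne_zero hα, by rw [smul_smul, inv_mul_cancel₀ hα, one_smul]⟩
  · exact hg.exists_smul_eq_of_mul_eq_mul hud hgd hh hh0 hdu hle heq.symm

-- The scalar `c` absorbs the factor by which the first irreducible factors differ.
theorem forall₂_smul_eq_of_prod_eq_smul_prod {gs us : List R} {c : F} {d : ℕ} (hc : c ≠ 0)
    (hprod : gs.prod = c • us.prod) (hd : Homog gs.prod d)
    (hgs : ∀ p ∈ gs, Irred p ∧ 0 < deg p) (hus : ∀ p ∈ us, Irred p ∧ 0 < deg p) :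
    gs.Forall₂ (fun p q => ∃ α : F, α ≠ 0 ∧ p = α • q) us := by
  induction gs generalizing us c d with
  | nil =>
    obtain rfl : us = [] := eq_nil_of_deg_prod_eq_zero (fun p hp => (hus p hp).2) <| by
      rw [← deg_smul _ hc, ← hprod, List.prod_nil, deg_one]
    exact .nil
  | cons g gs ih =>
    cases us with
    | nil =>
      refine absurd (eq_nil_of_deg_prod_eq_zero (fun p hp => (hgs p hp).2) ?_)
        (List.cons_ne_nil _ _)
      rw [hprod, List.prod_nil, deg_smul _ hc, deg_one]
    | cons u us =>
      rw [List.forall_mem_cons] at hgs hus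
      obtain ⟨⟨hg, hg_pos⟩, hgs⟩ := hgs
      obtain ⟨⟨hu, hu_pos⟩, hus⟩ := hus
      have hg0 := ne_zero_of_deg_pos hg_pos
      have hu0 := ne_zero_of_deg_pos hu_pos
      have hP0 := list_prod_ne_zero_of_deg_pos fun p hp => (hgs p hp).2
      have hQ0 := smul_ne_zero hc (list_prod_ne_zero_of_deg_pos fun p hp => (hus p hp).2)
      rw [List.prod_cons, List.prod_cons, ← mul_smul_comm] at hprod
      rw [List.prod_cons] at hd
      obtain ⟨hgd, hPd⟩ := hd.of_mul hg0 hP0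
      obtain ⟨hud, hQd⟩ := (hprod ▸ hd).of_mul hu0 hQ0
      obtain ⟨α, hα, rfl⟩ :=
        exists_smul_eq_of_mul_eq_mul hg hu hgd hud hPd hQd hP0 hQ0 hg_pos hu_pos hprod
      have hPQ : gs.prod = (α⁻¹ * c) • us.prod := by
        rw [smul_mul_assoc, ← mul_smul_comm] at hprod
        rw [mul_smul, ← mul_left_cancel₀ hu0 hprod, smul_smul, inv_mul_cancel₀ hα, one_smul]
      exact .cons ⟨α, hα, rfl⟩ (ih (mul_ne_zero (inv_ne_zero hα) hc) hPQ hPd hgs hus)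

theorem exists_irred_factorization (f : R) :
    ∃ L : List R, f = L.prod ∧ ∀ p ∈ L, Irred p := by
  induction hn : deg f using Nat.strong_induction_on generalizing f with
  | _ n ih =>
    by_cases hf : Irred f
    · exact ⟨[f], by simp, by simpa⟩
    · obtain ⟨g, h, rfl, hg, hh⟩ := not_not.mp hf
      have hdeg := deg_mul (ne_zero_of_deg_pos hg) (ne_zero_of_deg_pos hh)
      obtain ⟨Lg, rfl, hLg⟩ := ih (deg g) (by omega) g rfl
      obtain ⟨Lh, rfl, hLh⟩ := ih (deg h) (by omega) h rfl
      exact ⟨Lg ++ Lh, List.prod_append.symm,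
        fun p hp => (List.mem_append.mp hp).elim (hLg p) (hLh p)⟩

theorem stmt11 {F X : Type} [Field F] (f : MonoidAlgebra F (FreeMonoid X)) (d : Nat)
    (hf : Homog f d) :
    (∃ L : List (MonoidAlgebra F (FreeMonoid X)), f = L.prod ∧ ∀ p ∈ L, Irred p) ∧
    (∀ gs us : List (MonoidAlgebra F (FreeMonoid X)),
      f = gs.prod → f = us.prod →
      (∀ p ∈ gs, Irred p ∧ 0 < deg p) → (∀ p ∈ us, Irred p ∧ 0 < deg p) →
      gs.length = us.length ∧
        ∀ (i : Nat) (hi : i < gs.length) (hi' : i < us.length),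
          ∃ α : F, α ≠ 0 ∧ gs.get ⟨i, hi⟩ = α • us.get ⟨i, hi'⟩) := by
  refine ⟨exists_irred_factorization f, fun gs us hgs hus hgsi husi => ?_⟩
  exact List.forall₂_iff_get.mp <| forall₂_smul_eq_of_prod_eq_smul_prod one_ne_zero
    (by rw [← hgs, ← hus, one_smul]) (hgs ▸ hf) hgsi husi
end

section
/- Let f ∈ F⟨X⟩ be homogeneous of degree d, and let f' ∈ F⟨{x_{ij} : i∈[n], j∈[d]}⟩ be obtained by replacing, in each monomial of f, the variable in position j by its position-tagged copy (x_i in position j becomes x_{ij}). Then f' is variable-disjoint irreducible if and only if f is irreducible. -/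
/-- Position-tagging: each monomial of `f` is replaced by the word whose `j`-th letter is
the pair `(j, x)` where `x` is the `j`-th letter of the original monomial. -/
noncomputable def tagPoly {F X : Type} [Field F] (f : MonoidAlgebra F (FreeMonoid X)) :
    MonoidAlgebra F (FreeMonoid (Nat × X)) :=
  MonoidAlgebra.ofCoeff
    (Finsupp.mapDomain (fun m => FreeMonoid.ofList ((FreeMonoid.toList m).zipIdx.map Prod.swap)) f.coeff)

namespace FreeMonoid

variable {α β : Type*}

@[simp]
lemma length_map (f : α → β) (m : FreeMonoid α) : (map f m).length = m.length :=
  List.length_map _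

def tagFrom (n : ℕ) (m : FreeMonoid α) : FreeMonoid (ℕ × α) :=
  ofList (((toList m).zipIdx n).map Prod.swap)

@[simp]
lemma length_tagFrom (n : ℕ) (m : FreeMonoid α) : (tagFrom n m).length = m.length := by
  simp [tagFrom, length]

@[simp]
lemma map_snd_tagFrom (n : ℕ) (m : FreeMonoid α) : map Prod.snd (tagFrom n m) = m :=
  toList.injective <| by simp [tagFrom, Function.comp_def]

lemma tagFrom_injective (n : ℕ) : Function.Injective (tagFrom (α := α) n) :=
  Function.LeftInverse.injective (map_snd_tagFrom n)

lemma tagFrom_mul (n : ℕ) (a b : FreeMonoid α) :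
    tagFrom n (a * b) = tagFrom n a * tagFrom (n + a.length) b :=
  toList.injective <| by simp [tagFrom, List.zipIdx_append, length]

lemma fst_mem_Ico_of_mem_tagFrom {n : ℕ} {m : FreeMonoid α} {p : ℕ × α}
    (hp : p ∈ toList (tagFrom n m)) : p.1 ∈ Set.Ico n (n + m.length) := by
  obtain ⟨i, x⟩ := p
  have := List.mem_zipIdx (x := x) (i := i) (by simpa [tagFrom] using hp)
  exact ⟨this.1, by simpa [length] using this.2.1⟩

end FreeMonoid

namespace MonoidAlgebra

variable {R M N α : Type*} [Semiring R]

lemma mapDomain_mul_of_map_mul [Mul M] [Mul N] {T T₁ T₂ : M → N} {g h : MonoidAlgebra R M}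
    (hT : ∀ a ∈ g.coeff.support, ∀ b, T (a * b) = T₁ a * T₂ b) :
    mapDomain T (g * h) = mapDomain T₁ g * mapDomain T₂ h := by
  have hsum (S : M → N) (k : MonoidAlgebra R M) :
      mapDomain S k = k.coeff.sum fun a r => single (S a) r := by
    ext; simp [coeff_finsuppSum, Finsupp.mapDomain]
  rw [hsum T₁, hsum T₂, Finsupp.sum_mul, mul_def, mapDomain_sum]
  refine Finsupp.sum_congr fun a ha => ?_
  rw [Finsupp.mul_sum, mapDomain_sum]
  refine Finsupp.sum_congr fun b _ => ?_
  rw [mapDomain_single, hT a ha, single_mul_single]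

lemma mul_mem_support_of_length [NoZeroDivisors R]
    {g h : MonoidAlgebra R (FreeMonoid α)} {a₀ b₀ : FreeMonoid α}
    (ha₀ : a₀ ∈ g.coeff.support) (hb₀ : b₀ ∈ h.coeff.support)
    (hlen : ∀ a ∈ g.coeff.support, ∀ b ∈ h.coeff.support,
      a.length + b.length = a₀.length + b₀.length → a.length = a₀.length) :
    a₀ * b₀ ∈ (g * h).coeff.support := by
  have hunique : UniqueMul g.coeff.support h.coeff.support a₀ b₀ := by
    intro a b ha hb hab
    have hla := hlen a ha b hb (by simpa using congrArg FreeMonoid.length hab)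
    have := List.append_inj (congrArg FreeMonoid.toList hab) hla
    exact ⟨FreeMonoid.toList.injective this.1, FreeMonoid.toList.injective this.2⟩
  rw [Finsupp.mem_support_iff, coeff_mul_mul_of_uniqueMul hunique]
  exact mul_ne_zero (Finsupp.mem_support_iff.mp ha₀) (Finsupp.mem_support_iff.mp hb₀)

end MonoidAlgebra

open MonoidAlgebra FreeMonoid

section Homogeneous

variable {F X Y : Type} [Field F]

lemma deg_mapDomain_of_injective {T : FreeMonoid X → FreeMonoid Y} (hT : Function.Injective T)
    (hlen : ∀ m, (T m).length = m.length) (g : MonoidAlgebra F (FreeMonoid X)) :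
    deg (MonoidAlgebra.mapDomain T g) = deg g := by
  classical
  simp only [deg, coeff_mapDomain, Finsupp.mapDomain_support_of_injective hT, Finset.sup_image]
  exact Finset.sup_congr rfl fun m _ => hlen m

lemma ne_zero_of_deg_pos_s16 {g : MonoidAlgebra F (FreeMonoid X)} (hg : 0 < deg g) : g ≠ 0 := by
  rintro rfl
  simp [deg] at hg

namespace Homog

lemma deg_eq_s16 {g : MonoidAlgebra F (FreeMonoid X)} {a : ℕ} (hg : Homog g a) (hg0 : g ≠ 0) :
    deg g = a := by
  obtain ⟨m, hm⟩ := Finsupp.support_nonempty_iff.mpr (coeff_eq_zero.not.mpr hg0)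
  exact le_antisymm (Finset.sup_le fun m' hm' => (hg m' hm').le) (hg m hm ▸ Finset.le_sup hm)

lemma mapDomain {g : MonoidAlgebra F (FreeMonoid X)} {a : ℕ} (hg : Homog g a)
    {T : FreeMonoid X → FreeMonoid Y} (hT : ∀ m, (T m).length = m.length) :
    Homog (MonoidAlgebra.mapDomain T g) a := by
  classical
  intro m hm
  obtain ⟨m₀, hm₀, rfl⟩ := Finset.mem_image.mp (Finsupp.mapDomain_support hm)
  rw [hT]
  exact hg m₀ hm₀

lemma of_mul_eq {f g h : MonoidAlgebra F (FreeMonoid X)} {d : ℕ} (hf : Homog f d)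
    (hfgh : f = g * h) (hg : g ≠ 0) (hh : h ≠ 0) :
    Homog g (deg g) ∧ Homog h (deg h) ∧ deg g + deg h = d := by
  have hgs := Finsupp.support_nonempty_iff.mpr (coeff_eq_zero.not.mpr hg)
  have hhs := Finsupp.support_nonempty_iff.mpr (coeff_eq_zero.not.mpr hh)
  obtain ⟨a₀, ha₀, hmaxa⟩ := Finset.exists_max_image _ FreeMonoid.length hgs
  obtain ⟨b₀, hb₀, hmaxb⟩ := Finset.exists_max_image _ FreeMonoid.length hhs
  obtain ⟨a₁, ha₁, hmina⟩ := Finset.exists_min_image _ FreeMonoid.length hgs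
  obtain ⟨b₁, hb₁, hminb⟩ := Finset.exists_min_image _ FreeMonoid.length hhs
  have htop : a₀.length + b₀.length = d :=
    length_mul a₀ b₀ ▸ hf _ (hfgh ▸ mul_mem_support_of_length ha₀ hb₀
      fun a ha b hb _ => by linarith [hmaxa a ha, hmaxb b hb])
  have hbot : a₁.length + b₁.length = d :=
    length_mul a₁ b₁ ▸ hf _ (hfgh ▸ mul_mem_support_of_length ha₁ hb₁
      fun a ha b hb _ => by linarith [hmina a ha, hminb b hb])
  have hga : Homog g a₀.length := fun m hm =>
    le_antisymm (hmaxa m hm) (by linarith [hmina m hm, hmaxb b₁ hb₁])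
  have hhb : Homog h b₀.length := fun m hm =>
    le_antisymm (hmaxb m hm) (by linarith [hminb m hm, hmaxa a₁ ha₁])
  rw [hga.deg_eq_s16 hg, hhb.deg_eq_s16 hh]
  exact ⟨hga, hhb, htop⟩

end Homog

lemma tagPoly_eq_mapDomain (f : MonoidAlgebra F (FreeMonoid X)) :
    tagPoly f = mapDomain (tagFrom 0) f :=
  rfl

lemma tagPoly_mul_of_homog {g h : MonoidAlgebra F (FreeMonoid X)} {a : ℕ} (hg : Homog g a) :
    tagPoly (g * h) = mapDomain (tagFrom 0) g * mapDomain (tagFrom a) h :=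
  mapDomain_mul_of_map_mul fun m hm b => by
    change tagFrom 0 (m * b) = _
    rw [tagFrom_mul, hg m hm, zero_add]

lemma vars_mapDomain_tagFrom_subset {g : MonoidAlgebra F (FreeMonoid X)} {a : ℕ}
    (hg : Homog g a) (n : ℕ) :
    vars (mapDomain (tagFrom n) g) ⊆ Prod.fst ⁻¹' Set.Ico n (n + a) := by
  classical
  rintro p ⟨m, hm, hpm⟩
  obtain ⟨m₀, hm₀, rfl⟩ := Finset.mem_image.mp (Finsupp.mapDomain_support hm)
  exact hg m₀ hm₀ ▸ fst_mem_Ico_of_mem_tagFrom hpm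

lemma mapDomain_map_snd_tagPoly (f : MonoidAlgebra F (FreeMonoid X)) :
    mapDomain (map (Prod.snd : ℕ × X → X)) (tagPoly f) = f := by
  ext : 1
  simp [tagPoly_eq_mapDomain, ← Finsupp.mapDomain_comp, Function.comp_def]
  exact Finsupp.mapDomain_id

lemma exists_vars_disjoint_factorization_tagPoly {f g h : MonoidAlgebra F (FreeMonoid X)}
    {d : ℕ} (hf : Homog f d) (hfgh : f = g * h) (hg : 0 < deg g) (hh : 0 < deg h) :
    ∃ G H : MonoidAlgebra F (FreeMonoid (ℕ × X)),
      tagPoly f = G * H ∧ 0 < deg G ∧ 0 < deg H ∧ vars G ∩ vars H = ∅ := by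
  obtain ⟨hghom, hhhom, -⟩ :=
    hf.of_mul_eq hfgh (ne_zero_of_deg_pos_s16 hg) (ne_zero_of_deg_pos_s16 hh)
  have hdeg (n : ℕ) (k : MonoidAlgebra F (FreeMonoid X)) :
      deg (mapDomain (tagFrom n) k) = deg k :=
    deg_mapDomain_of_injective (tagFrom_injective n) (length_tagFrom n) k
  refine ⟨mapDomain (tagFrom 0) g, mapDomain (tagFrom (deg g)) h,
    hfgh ▸ tagPoly_mul_of_homog hghom, hdeg 0 g ▸ hg, hdeg _ h ▸ hh, ?_⟩
  have hgvars := vars_mapDomain_tagFrom_subset hghom 0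
  rw [zero_add] at hgvars
  exact Set.disjoint_iff_inter_eq_empty.mp <| (Set.Ico_disjoint_Ico_same.preimage Prod.fst).mono
    hgvars (vars_mapDomain_tagFrom_subset hhhom _)

lemma exists_factorization_of_tagPoly_eq_mul {f : MonoidAlgebra F (FreeMonoid X)}
    {G H : MonoidAlgebra F (FreeMonoid (ℕ × X))} {d : ℕ} (hf : Homog f d)
    (hfGH : tagPoly f = G * H) (hG : 0 < deg G) (hH : 0 < deg H) :
    ∃ g h : MonoidAlgebra F (FreeMonoid X), f = g * h ∧ 0 < deg g ∧ 0 < deg h := by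
  have hG0 := ne_zero_of_deg_pos_s16 hG
  have hH0 := ne_zero_of_deg_pos_s16 hH
  obtain ⟨hGhom, hHhom, -⟩ := (hf.mapDomain (length_tagFrom 0)).of_mul_eq hfGH hG0 hH0
  set untag := mapDomain (R := F) (map (Prod.snd : ℕ × X → X))
  have hfu : f = untag G * untag H := by
    rw [← mapDomain_map_snd_tagPoly f, hfGH]
    exact mapDomain_mul _ G H
  have hf0 : f ≠ 0 := by
    rintro rfl
    exact mul_ne_zero hG0 hH0 (hfGH ▸ (mapDomain_zero _))
  refine ⟨untag G, untag H, hfu, ?_, ?_⟩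
  · rwa [(hGhom.mapDomain (length_map _)).deg_eq_s16 (left_ne_zero_of_mul (hfu ▸ hf0))]
  · rwa [(hHhom.mapDomain (length_map _)).deg_eq_s16 (right_ne_zero_of_mul (hfu ▸ hf0))]

end Homogeneous

theorem stmt16 {F X : Type} [Field F] (f : MonoidAlgebra F (FreeMonoid X)) (d : Nat)
    (hf : Homog f d) : VDIrred (tagPoly f) ↔ Irred f := by
  constructor
  · rintro hVD ⟨g, h, hfgh, hg, hh⟩
    exact hVD (exists_vars_disjoint_factorization_tagPoly hf hfgh hg hh)
  · rintro hI ⟨G, H, hfGH, hG, hH, -⟩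
    exact hI (exists_factorization_of_tagPoly_eq_mul hf hfGH hG hH)
end
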